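/- arXiv:1606.05063 — 5 statements merged into one kernel-verified Lean document; each statement's English description precedes it below -/
import Mathlib

section
/- Let H be a strongly primary monoid that is not half-factorial. Then L(H) ≠ L(B(G₀)) for any subset G₀ of any abelian group; in particular, H is not a transfer Krull monoid. -/
open Classical

/-- The set of factorization lengths of `a` into irreducible elements (atoms);
by convention `{0}` for invertible elements. -/
noncomputable def mLengths {H : Type*} [Monoid H] (a : H) : Set ℕ :=
  if IsUnit a then {0}
  else {n | ∃ l : List H, l.length = n ∧ (∀ x ∈ l, Irreducible x) ∧ l.prod = a}

/-- A commutative cancellative monoid `M` is strongly primary if it has a non-unit and for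
every non-unit `a` there is `n ∈ ℕ` such that every product of `n` non-units lies in `aM`. -/
def StronglyPrimary (M : Type*) [CancelCommMonoid M] : Prop :=
  (∃ a : M, ¬IsUnit a) ∧
    ∀ a : M, ¬IsUnit a → ∃ n : ℕ, 0 < n ∧
      ∀ l : List M, l.length = n → (∀ x ∈ l, ¬IsUnit x) → a ∣ l.prod

/-- `S` is a minimal zero-sum sequence over `G`. -/
def IsMinZS {G : Type*} [AddCommGroup G] (S : Multiset G) : Prop :=
  S ≠ 0 ∧ S.sum = 0 ∧ ∀ T : Multiset G, T ≤ S → T ≠ 0 → T ≠ S → T.sum ≠ 0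

/-- `S` is a minimal zero-sum sequence with all terms in `G₀`, i.e. an atom of `𝓑(G₀)`. -/
def IsMinZSOn {G : Type*} [AddCommGroup G] (G₀ : Set G) (S : Multiset G) : Prop :=
  (∀ x ∈ S, x ∈ G₀) ∧ IsMinZS S

/-- The set of factorization lengths of `S` into atoms of the monoid `𝓑(G₀)`. -/
def ZSLengthsOn {G : Type*} [AddCommGroup G] (G₀ : Set G) (S : Multiset G) : Set ℕ :=
  {n | ∃ l : Multiset (Multiset G),
    Multiset.card l = n ∧ (∀ T ∈ l, IsMinZSOn G₀ T) ∧ l.sum = S}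

/-!
Let `b` be a non-unit with two factorization lengths `m ≠ n`, and let `N` be the exponent that
strong primariness attaches to `b`. A product of more than `N` atoms is `b` times a non-unit `c`;
factoring `c` and combining with the two factorizations of `b` gives two distinct lengths.
Hence in `H` the singleton sets of lengths `{k}` have `k ≤ N`.

In `𝓑(G₀)`, take an atom `U` whose support is minimal among all atoms. Then `U` is the only atom
whose terms lie in the support of `U`, so `k • U` factors only as `U + ⋯ + U` and its set of
lengths is `{k}` for every `k`. Equal systems of sets of lengths would thus put `{N + 1}` into
the system of `H`.
-/

section Monoid

variable {H : Type*} [Monoid H]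

theorem mLengths_of_isUnit {a : H} (ha : IsUnit a) : mLengths a = {0} :=
  if_pos ha

theorem mem_mLengths_iff {a : H} (ha : ¬IsUnit a) {n : ℕ} :
    n ∈ mLengths a ↔ ∃ l : List H, l.length = n ∧ (∀ x ∈ l, Irreducible x) ∧ l.prod = a := by
  rw [mLengths, if_neg ha]
  rfl

end Monoid

section CommMonoid

variable {H : Type*} [CommMonoid H]

theorem exists_nonunit_factorization_length_succ {l : List H} (hl : ∀ y ∈ l, ¬IsUnit y)
    {y : H} (hy : y ∈ l) (hirr : ¬Irreducible y) :
    ∃ l' : List H, (∀ z ∈ l', ¬IsUnit z) ∧ l'.prod = l.prod ∧ l'.length = l.length + 1 := by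
  obtain ⟨a, b, rfl, ha, hb⟩ : ∃ a b, y = a * b ∧ ¬IsUnit a ∧ ¬IsUnit b := by
    simpa [irreducible_iff, hl y hy] using hirr
  refine ⟨a :: b :: l.erase (a * b), ?_, ?_, ?_⟩
  · simp only [List.mem_cons]
    rintro z (rfl | rfl | hz)
    exacts [ha, hb, hl z (List.mem_of_mem_erase hz)]
  · rw [List.prod_cons, List.prod_cons, ← mul_assoc, List.prod_erase hy]
  · simp only [List.length_cons, List.length_erase_of_mem hy]
    have := List.length_pos_of_mem hy
    omega

end CommMonoid

namespace StronglyPrimary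

variable {H : Type*} [CancelCommMonoid H]

theorem exists_prod_eq_mul_of_lt_length (hsp : StronglyPrimary H) {b : H} (hb : ¬IsUnit b) :
    ∃ N : ℕ, ∀ l : List H, (∀ x ∈ l, ¬IsUnit x) → N < l.length →
      ∃ c, ¬IsUnit c ∧ l.prod = b * c := by
  obtain ⟨N, -, hN⟩ := hsp.2 b hb
  refine ⟨N, fun l hl hlen => ?_⟩
  obtain ⟨w, hw⟩ := hN (l.take N) (List.length_take_of_le hlen.le)
    (fun x hx => hl x (List.mem_of_mem_take hx))
  refine ⟨w * (l.drop N).prod, fun hunit => ?_, ?_⟩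
  · obtain ⟨x, hx⟩ := List.exists_mem_of_ne_nil (l.drop N) (by simp; omega)
    exact hl x (List.mem_of_mem_drop hx)
      (List.prod_isUnit_iff.1 (isUnit_of_mul_isUnit_right hunit) x hx)
  · rw [← List.prod_take_mul_prod_drop l N, hw, mul_assoc]

theorem exists_length_le (hsp : StronglyPrimary H) {x : H} (hx : ¬IsUnit x) :
    ∃ N : ℕ, ∀ l : List H, (∀ y ∈ l, ¬IsUnit y) → l.prod = x → l.length ≤ N := by
  obtain ⟨N, hN⟩ := hsp.exists_prod_eq_mul_of_lt_length hx
  refine ⟨N, fun l hl hp => not_lt.1 fun hlen => ?_⟩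
  obtain ⟨c, hc, hxc⟩ := hN l hl hlen
  exact hc (mul_eq_left.1 (hxc.symm.trans hp) ▸ isUnit_one)

theorem exists_irreducible_factorization (hsp : StronglyPrimary H) {x : H} (hx : ¬IsUnit x) :
    ∃ l : List H, (∀ y ∈ l, Irreducible y) ∧ l.prod = x := by
  obtain ⟨N, hN⟩ := hsp.exists_length_le hx
  let P : ℕ → Prop := fun j => ∃ l : List H, (∀ y ∈ l, ¬IsUnit y) ∧ l.prod = x ∧ l.length = j
  have hx' : ∀ y ∈ [x], ¬IsUnit y := by simpa using hx
  have hP1 : P 1 := ⟨[x], hx', by simp, rfl⟩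
  -- a factorization into non-units of maximal length consists of atoms
  obtain ⟨l, hl, hp, hlen⟩ := Nat.findGreatest_spec (hN [x] hx' (by simp)) hP1
  refine ⟨l, fun y hy => by_contra fun hirr => ?_, hp⟩
  obtain ⟨l', hl', hp', hlen'⟩ := exists_nonunit_factorization_length_succ hl hy hirr
  have hle : l.length + 1 ≤ N := hlen' ▸ hN l' hl' (hp'.trans hp)
  exact Nat.findGreatest_is_greatest (P := P) (by omega) hle ⟨l', hl', hp'.trans hp, by omega⟩

theorem exists_le_of_mLengths_eq_singleton (hsp : StronglyPrimary H)
    (hnhf : ∃ a : H, ∃ m ∈ mLengths a, ∃ n ∈ mLengths a, m ≠ n) :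
    ∃ N : ℕ, ∀ (a : H) (k : ℕ), mLengths a = {k} → k ≤ N := by
  obtain ⟨b, m, hm, n, hn, hmn⟩ := hnhf
  have hb : ¬IsUnit b := fun h => hmn (by simp_all [mLengths_of_isUnit h])
  obtain ⟨N, hN⟩ := hsp.exists_prod_eq_mul_of_lt_length hb
  refine ⟨N, fun a k hak => not_lt.1 fun hk => hmn ?_⟩
  have ha : ¬IsUnit a := fun h => by
    rw [mLengths_of_isUnit h, eq_comm, Set.singleton_eq_singleton_iff] at hak
    omega
  obtain ⟨l, rfl, hl, hp⟩ := (mem_mLengths_iff ha).1 (hak ▸ rfl : k ∈ mLengths a)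
  obtain ⟨c, hc, hbc⟩ := hN l (fun y hy => (hl y hy).not_isUnit) hk
  obtain ⟨lc, hlc, rfl⟩ := hsp.exists_irreducible_factorization hc
  have hlen : ∀ j ∈ mLengths b, j + lc.length = l.length := by
    intro j hj
    obtain ⟨lb, rfl, hlb, rfl⟩ := (mem_mLengths_iff hb).1 hj
    have hmem : (lb ++ lc).length ∈ mLengths a := (mem_mLengths_iff ha).2
      ⟨lb ++ lc, rfl, by simpa [or_imp, forall_and] using ⟨hlb, hlc⟩,
        by rw [List.prod_append, ← hbc, hp]⟩
    simpa [hak] using hmem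
  have := hlen m hm
  have := hlen n hn
  omega

end StronglyPrimary

theorem Multiset.le_of_nsmul_eq_nsmul {α : Type*} {S T : Multiset α} {p q : ℕ}
    (h : q • S = p • T) (hpq : p ≤ q) (hq : 0 < q) : S ≤ T := by
  refine Multiset.le_iff_count.2 fun x => Nat.le_of_mul_le_mul_left ?_ hq
  calc q * S.count x = p * T.count x := by
        simpa only [Multiset.count_nsmul] using congrArg (Multiset.count x) h
    _ ≤ q * T.count x := Nat.mul_le_mul_right _ hpq

section ZeroSum

variable {G : Type*} [AddCommGroup G]

theorem IsMinZS.eq_of_le {T U : Multiset G} (hU : IsMinZS U) (hT0 : T ≠ 0) (hT : T.sum = 0)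
    (hTU : T ≤ U) : T = U :=
  by_contra fun h => hU.2.2 T hTU hT0 h hT

theorem IsMinZS.eq_of_nsmul_eq_nsmul {T U : Multiset G} (hT : IsMinZS T) (hU : IsMinZS U)
    {p q : ℕ} (hp : 0 < p) (hq : 0 < q) (h : q • T = p • U) : T = U := by
  rcases le_total p q with hpq | hqp
  · exact hU.eq_of_le hT.1 hT.2.1 (Multiset.le_of_nsmul_eq_nsmul h hpq hq)
  · exact (hT.eq_of_le hU.1 hU.2.1 (Multiset.le_of_nsmul_eq_nsmul h.symm hqp hp)).symm

theorem exists_isMinZS_le {Z : Multiset G} (hZ : Z ≠ 0) (hs : Z.sum = 0) :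
    ∃ W ≤ Z, IsMinZS W := by
  obtain ⟨W, ⟨hWZ, hW0, hWs⟩, hmin⟩ := wellFounded_lt.has_min
    {T : Multiset G | T ≤ Z ∧ T ≠ 0 ∧ T.sum = 0} ⟨Z, le_rfl, hZ, hs⟩
  exact ⟨W, hWZ, hW0, hWs, fun T hTW hT0 hne hTs =>
    hmin T ⟨hTW.trans hWZ, hT0, hTs⟩ (lt_of_le_of_ne hTW hne)⟩

def IsSupportMinimal (U : Multiset G) : Prop :=
  ∀ W : Multiset G, IsMinZS W → (∀ x ∈ W, x ∈ U) → ∀ x ∈ U, x ∈ W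

theorem IsMinZS.eq_of_isSupportMinimal {T U : Multiset G} (hT : IsMinZS T) (hU : IsMinZS U)
    (hUmin : IsSupportMinimal U) (hTU : ∀ x ∈ T, x ∈ U) : T = U := by
  -- For `g₀` minimising `T(g) / U(g)`, `q • T - p • U` is a zero-sum sequence avoiding `g₀`,
  -- so by support-minimality it vanishes.
  obtain ⟨g₀, hg₀, hmin⟩ := U.toFinset.exists_min_image
    (fun g => (T.count g : ℚ) / U.count g) (Multiset.toFinset_nonempty.2 hU.1)
  rw [Multiset.mem_toFinset] at hg₀
  set p := T.count g₀
  set q := U.count g₀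
  have hq : 0 < q := Multiset.count_pos.2 hg₀
  have hp : 0 < p := Multiset.count_pos.2 (hUmin T hT hTU g₀ hg₀)
  have hle : p • U ≤ q • T := by
    refine Multiset.le_iff_count.2 fun x => ?_
    rw [Multiset.count_nsmul, Multiset.count_nsmul]
    by_cases hx : x ∈ U
    · have hUx : (0 : ℚ) < U.count x := by exact_mod_cast Multiset.count_pos.2 hx
      have hx' := hmin x (Multiset.mem_toFinset.2 hx)
      rw [div_le_div_iff₀ (by exact_mod_cast hq) hUx] at hx'
      exact_mod_cast (by linarith : (p : ℚ) * U.count x ≤ q * T.count x)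
    · simp [Multiset.count_eq_zero.2 hx]
  set Z := q • T - p • U
  have hZ : p • U + Z = q • T := add_tsub_cancel_of_le hle
  suffices Z = 0 from hT.eq_of_nsmul_eq_nsmul hU hp hq (by rw [← hZ, this, add_zero])
  by_contra hZ0
  have hZs : Z.sum = 0 := by
    simpa [Multiset.sum_nsmul, hU.2.1, hT.2.1] using congrArg Multiset.sum hZ
  obtain ⟨W, hWZ, hW⟩ := exists_isMinZS_le hZ0 hZs
  have hWU : ∀ x ∈ W, x ∈ U := fun x hx =>
    hTU x (Multiset.mem_of_mem_nsmul (Multiset.mem_of_le (hWZ.trans tsub_le_self) hx))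
  have hZg₀ : Z.count g₀ = 0 := by simp [Z, Multiset.count_sub, p, q, mul_comm]
  exact Multiset.count_eq_zero.1 hZg₀ (Multiset.mem_of_le hWZ (hUmin W hW hWU g₀ hg₀))

theorem exists_isMinZSOn_isSupportMinimal {G₀ : Set G} {U₀ : Multiset G}
    (hU₀ : IsMinZSOn G₀ U₀) : ∃ U, IsMinZSOn G₀ U ∧ IsSupportMinimal U := by
  obtain ⟨U, hU, hmin⟩ := (InvImage.wf (fun T : Multiset G => T.toFinset.card)
    wellFounded_lt).has_min {T | IsMinZSOn G₀ T} ⟨U₀, hU₀⟩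
  refine ⟨U, hU, fun W hW hWU => ?_⟩
  have hsub : W.toFinset ⊆ U.toFinset := fun x hx =>
    Multiset.mem_toFinset.2 (hWU x (Multiset.mem_toFinset.1 hx))
  have hcard : U.toFinset.card ≤ W.toFinset.card :=
    not_lt.1 (hmin W ⟨fun x hx => hU.1 x (hWU x hx), hW⟩)
  intro x hx
  rw [← Multiset.mem_toFinset, Finset.eq_of_subset_of_card_le hsub hcard]
  exact Multiset.mem_toFinset.2 hx

theorem ZSLengthsOn_nsmul {G₀ : Set G} {U : Multiset G} (hU : IsMinZSOn G₀ U)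
    (hUmin : IsSupportMinimal U) (k : ℕ) : ZSLengthsOn G₀ (k • U) = {k} := by
  ext n
  constructor
  · rintro ⟨l, rfl, hl, hsum⟩
    have hlU : ∀ T ∈ l, T = U := fun T hT =>
      (hl T hT).2.eq_of_isSupportMinimal hU.2 hUmin fun x hx => Multiset.mem_of_mem_nsmul
        (Multiset.mem_of_le (hsum ▸ Multiset.le_sum_of_mem hT : T ≤ k • U) hx)
    have hcard := congrArg Multiset.card hsum
    rw [Multiset.eq_replicate_card.2 hlU, Multiset.sum_replicate, Multiset.card_nsmul,
      Multiset.card_nsmul] at hcard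
    exact Nat.eq_of_mul_eq_mul_right (Multiset.card_pos.2 hU.2.1) hcard
  · rintro rfl
    refine ⟨Multiset.replicate n U, Multiset.card_replicate _ _, fun T hT => ?_,
      Multiset.sum_replicate n U⟩
    rwa [Multiset.eq_of_mem_replicate hT]

theorem exists_isMinZSOn_of_mem_ZSLengthsOn {G₀ : Set G} {B : Multiset G} {n : ℕ}
    (hn : n ∈ ZSLengthsOn G₀ B) (hn0 : n ≠ 0) : ∃ U, IsMinZSOn G₀ U := by
  obtain ⟨l, rfl, hl, -⟩ := hn
  obtain ⟨U, hU⟩ := Multiset.card_pos_iff_exists_mem.1 (Nat.pos_of_ne_zero hn0)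
  exact ⟨U, hl U hU⟩

end ZeroSum

/-- If `H` is a strongly primary monoid that is not half-factorial, then the system of sets
of lengths of `H` differs from the system of sets of lengths of the monoid of zero-sum
sequences `𝓑(G₀)` for every subset `G₀` of every abelian group `G`; in particular `H` is not
a transfer Krull monoid. -/
theorem stmt8 {H : Type*} [CancelCommMonoid H] (hsp : StronglyPrimary H)
    (hnhf : ∃ a : H, ∃ m ∈ mLengths a, ∃ n ∈ mLengths a, m ≠ n) :
    ∀ (G : Type*) [AddCommGroup G] (G₀ : Set G),
      {L : Set ℕ | ∃ a : H, L = mLengths a} ≠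
        {L : Set ℕ | ∃ B : Multiset G,
          (∀ x ∈ B, x ∈ G₀) ∧ B.sum = 0 ∧ L = ZSLengthsOn G₀ B} := by
  intro G _ G₀ hEq
  obtain ⟨N, hN⟩ := hsp.exists_le_of_mLengths_eq_singleton hnhf
  obtain ⟨a, m, hm, n, hn, hmn⟩ := hnhf
  obtain ⟨B, -, -, hB⟩ : mLengths a ∈ {L : Set ℕ | ∃ B : Multiset G,
      (∀ x ∈ B, x ∈ G₀) ∧ B.sum = 0 ∧ L = ZSLengthsOn G₀ B} := hEq ▸ ⟨a, rfl⟩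
  obtain ⟨U₀, hU₀⟩ : ∃ U₀, IsMinZSOn G₀ U₀ := by
    rcases eq_or_ne m 0 with rfl | hm0
    · exact exists_isMinZSOn_of_mem_ZSLengthsOn (hB ▸ hn) hmn.symm
    · exact exists_isMinZSOn_of_mem_ZSLengthsOn (hB ▸ hm) hm0
  obtain ⟨U, hU, hUmin⟩ := exists_isMinZSOn_isSupportMinimal hU₀
  obtain ⟨b, hb⟩ : ({N + 1} : Set ℕ) ∈ {L : Set ℕ | ∃ a : H, L = mLengths a} :=
    hEq ▸ ⟨(N + 1) • U, fun x hx => hU.1 x (Multiset.mem_of_mem_nsmul hx),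
      by simp [Multiset.sum_nsmul, hU.2.2.1], (ZSLengthsOn_nsmul hU hUmin _).symm⟩
  have := hN b (N + 1) hb.symm
  omega
end

section
/- Let G = C₂⁴ be the elementary abelian group of order 16 with basis (e₁,e₂,e₃,e₄), let e₀ = e₁+e₂+e₃+e₄, and let U = e₀e₁e₂e₃e₄ be the zero-sum sequence over G consisting of these five elements. Then for every n ∈ ℕ₀, the set of lengths of U^{2n} in B(G) is L(U^{2n}) = 2n + 3·[0,n] = {2n + 3j : 0 ≤ j ≤ n}. -/
/-- The set of factorization lengths of `S` into atoms (minimal zero-sum sequences)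
of the monoid of zero-sum sequences over `G`. -/
def ZSLengths {G : Type*} [AddCommGroup G] (S : Multiset G) : Set ℕ :=
  {n | ∃ l : Multiset (Multiset G),
    Multiset.card l = n ∧ (∀ T ∈ l, IsMinZS T) ∧ l.sum = S}

/-- The basis elements `e₁, …, e₄` of `C₂⁴ = (ℤ/2ℤ)⁴`. -/
def eC2 (i : Fin 4) : Fin 4 → ZMod 2 := Pi.single i 1

/-- `e₀ = e₁ + e₂ + e₃ + e₄`. -/
def e0C2 : Fin 4 → ZMod 2 := eC2 0 + eC2 1 + eC2 2 + eC2 3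

/-- The minimal zero-sum sequence `U = e₀e₁e₂e₃e₄` of length 5 over `C₂⁴`. -/
def UC2 : Multiset (Fin 4 → ZMod 2) := ↑[e0C2, eC2 0, eC2 1, eC2 2, eC2 3]

abbrev G2 := Fin 4 → ZMod 2

lemma UC2_nodup : UC2.Nodup := by decide

lemma UC2_ne_zero : ∀ g ∈ UC2, g ≠ (0 : G2) := by decide

lemma zs_sub : ∀ T ∈ UC2.powerset, T.sum = 0 → T = 0 ∨ T = UC2 := by decide

lemma minU : IsMinZS UC2 := by
  refine ⟨by decide, by decide, ?_⟩
  intro T hle h0 hT hsum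
  rcases zs_sub T (Multiset.mem_powerset.2 hle) hsum with h | h
  · exact h0 h
  · exact hT h

lemma pair_sum (g : G2) : ({g, g} : Multiset G2).sum = 0 := by
  have : g + g = 0 := CharTwo.add_self_eq_zero g
  simp [this]

lemma minPair (g : G2) (hg : g ≠ 0) : IsMinZS ({g, g} : Multiset G2) := by
  refine ⟨by simp [Multiset.insert_eq_cons], pair_sum g, ?_⟩
  intro T hle h0 hT
  have hcard : Multiset.card T ≤ 2 := by
    have := Multiset.card_le_card hle
    simpa [Multiset.insert_eq_cons] using this
  have hpos : 0 < Multiset.card T := Multiset.card_pos.2 h0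
  interval_cases h : Multiset.card T
  · obtain ⟨a, rfl⟩ := Multiset.card_eq_one.1 h
    have : a ∈ ({g, g} : Multiset G2) := Multiset.mem_of_le hle (by simp)
    have ha : a = g := by simpa using this
    simpa [ha] using hg
  · exact absurd (Multiset.eq_of_le_of_card_le hle (by simp [Multiset.insert_eq_cons, h])) hT

lemma classify (T : Multiset G2) (hmin : IsMinZS T) (hsub : ∀ a ∈ T, a ∈ UC2) :
    T = UC2 ∨ ∃ g ∈ UC2, T = {g, g} := by
  by_cases h : ∃ g, 2 ≤ T.count g
  · obtain ⟨g, hg⟩ := h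
    have hgT : g ∈ T := by rw [← Multiset.count_pos]; omega
    have hle : ({g, g} : Multiset G2) ≤ T := by
      rw [Multiset.le_iff_count]
      intro a
      rcases eq_or_ne a g with rfl | hne
      · simpa [Multiset.insert_eq_cons] using hg
      · simp [Multiset.insert_eq_cons, Multiset.count_cons, Multiset.count_singleton, hne]
    right
    refine ⟨g, hsub g hgT, ?_⟩
    by_contra hne
    exact hmin.2.2 _ hle (by simp [Multiset.insert_eq_cons]) (fun h => hne h.symm) (pair_sum g)
  · push_neg at h
    have hnd : T.Nodup := Multiset.nodup_iff_count_le_one.2 fun a => by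
      have := h a; omega
    have hle : T ≤ UC2 := by
      rw [Multiset.le_iff_count]
      intro a
      by_cases ha : a ∈ T
      · have h1 : T.count a ≤ 1 := Multiset.nodup_iff_count_le_one.1 hnd a
        have h2 : 1 ≤ UC2.count a := Multiset.count_pos.2 (hsub a ha)
        omega
      · simp [Multiset.count_eq_zero_of_notMem ha]
    rcases zs_sub T (Multiset.mem_powerset.2 hle) hmin.2.1 with h0 | h
    · exact absurd h0 hmin.1
    · exact Or.inl h

/-- The five "pair" atoms. -/
def pairsC2 : Multiset (Multiset G2) :=
  ↑[({e0C2, e0C2} : Multiset G2), {eC2 0, eC2 0}, {eC2 1, eC2 1}, {eC2 2, eC2 2},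
    {eC2 3, eC2 3}]

lemma pairsC2_sum : pairsC2.sum = UC2 + UC2 := by decide

lemma card_sum' {α : Type*} (s : Multiset (Multiset α)) :
    Multiset.card s.sum = (s.map Multiset.card).sum := by
  induction s using Multiset.induction with
  | empty => simp
  | cons a s ih => simp [ih]

lemma count_sum' {α : Type*} [DecidableEq α] (a : α) (s : Multiset (Multiset α)) :
    Multiset.count a s.sum = (s.map (Multiset.count a)).sum := by
  induction s using Multiset.induction with
  | empty => simp
  | cons b s ih => simp [ih]

/-- Over `G = C₂⁴`, with `U = e₀e₁e₂e₃e₄`, one has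
`L(U^{2n}) = 2n + 3·[0,n] = {2n + 3j : 0 ≤ j ≤ n}` for every `n ∈ ℕ₀`. -/
theorem stmt14 (n : ℕ) :
    ZSLengths ((2 * n) • UC2) = {m | ∃ j ≤ n, m = 2 * n + 3 * j} := by
  ext m
  simp only [ZSLengths, Set.mem_setOf_eq]
  constructor
  · rintro ⟨l, hcard, hmin, hsum⟩
    rcases Nat.eq_zero_or_pos n with rfl | hn
    · refine ⟨0, le_refl _, ?_⟩
      have hl : l = 0 := by
        rw [Multiset.eq_zero_iff_forall_notMem]
        intro T hT
        have hle : T ≤ l.sum := Multiset.single_le_sum (fun x _ => Multiset.zero_le x) T hT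
        rw [hsum] at hle
        simp only [Nat.mul_zero, zero_smul, Multiset.le_zero] at hle
        exact (hmin T hT).1 hle
      subst hl
      simp at hcard
      omega
    -- main case
    have hTsub : ∀ T ∈ l, ∀ a ∈ T, a ∈ UC2 := by
      intro T hT a ha
      have hle : T ≤ l.sum := Multiset.single_le_sum (fun x _ => Multiset.zero_le x) T hT
      rw [hsum] at hle
      have : a ∈ (2 * n) • UC2 := Multiset.mem_of_le hle ha
      rw [Multiset.mem_nsmul] at this
      exact this.2
    have hclass : ∀ T ∈ l, T = UC2 ∨ ∃ g ∈ UC2, T = {g, g} :=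
      fun T hT => classify T (hmin T hT) (hTsub T hT)
    classical
    set A := l.filter (fun T => T = UC2) with hA
    set B := l.filter (fun T => ¬T = UC2) with hB
    have hAB : A + B = l := Multiset.filter_add_not _ l
    set k := Multiset.card A with hk
    set p := Multiset.card B with hp
    have hArep : A = Multiset.replicate k UC2 := by
      rw [Multiset.eq_replicate]
      exact ⟨rfl, fun T hT => (Multiset.mem_filter.1 hT).2⟩
    have hBpair : ∀ T ∈ B, ∃ g ∈ UC2, T = {g, g} := by
      intro T hT
      have hTl : T ∈ l := (Multiset.mem_filter.1 hT).1
      rcases hclass T hTl with h | h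
      · exact absurd h (Multiset.mem_filter.1 hT).2
      · exact h
    -- card equation
    have hcardsum : (5 : ℕ) * k + 2 * p = 10 * n := by
      have h1 : Multiset.card l.sum = (l.map Multiset.card).sum := card_sum' l
      rw [hsum, Multiset.card_nsmul] at h1
      have hUcard : Multiset.card UC2 = 5 := rfl
      rw [hUcard] at h1
      have h2 : (l.map Multiset.card).sum
          = (A.map Multiset.card).sum + (B.map Multiset.card).sum := by
        rw [← hAB]; simp
      have h3 : (A.map Multiset.card).sum = 5 * k := by
        rw [hArep, Multiset.map_replicate, Multiset.sum_replicate, hUcard]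
        simp [mul_comm]
      have h4 : (B.map Multiset.card).sum = 2 * p := by
        have hr : B.map Multiset.card = Multiset.replicate p 2 := by
          rw [Multiset.eq_replicate]
          refine ⟨by simp [hp], ?_⟩
          intro b hb
          obtain ⟨T, hT, rfl⟩ := Multiset.mem_map.1 hb
          obtain ⟨g, _, rfl⟩ := hBpair T hT
          simp [Multiset.insert_eq_cons]
        rw [hr, Multiset.sum_replicate]
        simp [mul_comm]
      omega
    -- parity of k
    have hkeven : 2 ∣ k := by
      have h1 : Multiset.count e0C2 l.sum = (l.map (Multiset.count e0C2)).sum :=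
        count_sum' _ l
      rw [hsum, Multiset.count_nsmul] at h1
      have hU1 : Multiset.count e0C2 UC2 = 1 := by decide
      rw [hU1, mul_one] at h1
      have h2 : (l.map (Multiset.count e0C2)).sum
          = (A.map (Multiset.count e0C2)).sum + (B.map (Multiset.count e0C2)).sum := by
        rw [← hAB]; simp
      have h3 : (A.map (Multiset.count e0C2)).sum = k := by
        rw [hArep, Multiset.map_replicate, Multiset.sum_replicate, hU1]
        simp
      have h4 : 2 ∣ (B.map (Multiset.count e0C2)).sum := by
        refine Multiset.dvd_sum ?_
        intro x hx
        obtain ⟨T, hT, rfl⟩ := Multiset.mem_map.1 hx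
        obtain ⟨g, _, rfl⟩ := hBpair T hT
        rcases eq_or_ne e0C2 g with rfl | hne
        · simp [Multiset.insert_eq_cons, Multiset.count_cons, Multiset.count_singleton]
        · simp [Multiset.insert_eq_cons, Multiset.count_cons, Multiset.count_singleton, hne]
      omega
    obtain ⟨m', hm'⟩ := hkeven
    have hmval : m = k + p := by
      rw [← hcard, ← hAB]
      simp [← hk, ← hp]
    refine ⟨n - m', by omega, by omega⟩
  · rintro ⟨j, hj, rfl⟩
    refine ⟨(2 * (n - j)) • {UC2} + j • pairsC2, ?_, ?_, ?_⟩
    · rw [Multiset.card_add, Multiset.card_nsmul, Multiset.card_nsmul]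
      have h5 : Multiset.card pairsC2 = 5 := rfl
      rw [h5, Multiset.card_singleton]
      omega
    · intro T hT
      rcases Multiset.mem_add.1 hT with h | h
      · rw [Multiset.mem_nsmul] at h
        have : T = UC2 := by simpa using h.2
        rw [this]; exact minU
      · rw [Multiset.mem_nsmul] at h
        have hTp : T ∈ pairsC2 := h.2
        fin_cases hTp <;> exact minPair _ (by decide)
    · rw [Multiset.sum_add, Multiset.sum_nsmul, Multiset.sum_nsmul, Multiset.sum_singleton,
        pairsC2_sum]
      have h2 : UC2 + UC2 = 2 • UC2 := (two_nsmul UC2).symm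
      rw [h2, smul_smul, ← add_nsmul]
      congr 1
      omega
end

section
/- Let G = C₂⁴ with basis (e₁,…,e₄), e₀ = e₁+e₂+e₃+e₄, and let U = e₀e₁e₂e₃e₄, U₂ = e₁e₂(e₁+e₃)(e₂+e₄)(e₃+e₄). Then L(U·U₂) = [2,4], i.e., the zero-sum sequence U·U₂ has factorizations of lengths exactly 2, 3, and 4. -/
/-- The minimal zero-sum sequence `U₂ = e₁e₂(e₁+e₃)(e₂+e₄)(e₃+e₄)` of length 5 over `C₂⁴`. -/
def U2C2 : Multiset (Fin 4 → ZMod 2) :=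
  ↑[eC2 0, eC2 1, eC2 0 + eC2 2, eC2 1 + eC2 3, eC2 2 + eC2 3]


/-! Every atom avoiding `0` has at least two terms, so a factorization of `U·U₂` (ten nonzero
terms) has length at most `5`; length `5` would force all atoms to be pairs `a (-a) = a a`, so every
element would occur an even number of times, whereas `e₀` occurs once. `U·U₂` is not itself an
atom, since `U` is a proper zero-sum subsequence, so the length is at least `2`. Lengths `2`, `3`,
`4` are realised by `U · U₂`, `e₁² · (e₀ e₂ (e₁+e₃) e₄) · (e₂ e₃ (e₂+e₄) (e₃+e₄))` and
`e₁² · e₂² · (e₀ (e₁+e₃) (e₂+e₄)) · (e₃ e₄ (e₃+e₄))`. -/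

namespace IsMinZS

variable {G : Type*} [AddCommGroup G] {S T : Multiset G}

instance [DecidableEq G] : DecidablePred (IsMinZS (G := G)) := fun S =>
  decidable_of_iff (S ≠ 0 ∧ S.sum = 0 ∧ ∀ T ∈ S.powerset, T ≠ 0 → T ≠ S → T.sum ≠ 0) <| by
    simp only [Multiset.mem_powerset, IsMinZS]

lemma two_le_card (hT : IsMinZS T) (h0 : (0 : G) ∉ T) : 2 ≤ Multiset.card T := by
  obtain ⟨hne, hsum, -⟩ := hT
  by_contra! h
  interval_cases hc : Multiset.card T
  · exact hne (Multiset.card_eq_zero.mp hc)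
  · obtain ⟨a, rfl⟩ := Multiset.card_eq_one.mp hc
    rw [Multiset.sum_singleton] at hsum
    simp [hsum] at h0

lemma two_le_card_of_le (hT : IsMinZS T) (hTS : T ≤ S) (h0 : (0 : G) ∉ S) :
    2 ≤ Multiset.card T :=
  hT.two_le_card fun h => h0 (Multiset.mem_of_le hTS h)

lemma exists_eq_pair_neg (hT : IsMinZS T) (h2 : Multiset.card T = 2) : ∃ a, T = {a, -a} := by
  obtain ⟨a, b, rfl⟩ := Multiset.card_eq_two.mp h2
  have hab : a + b = 0 := by simpa using hT.2.1
  exact ⟨a, by rw [neg_eq_of_add_eq_zero_right hab]⟩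

end IsMinZS

section ZSLengths

variable {G : Type*} [AddCommGroup G] {S : Multiset G} {n : ℕ}

lemma zero_mem_zsLengths_iff : 0 ∈ ZSLengths S ↔ S = 0 := by
  constructor
  · rintro ⟨l, hl, -, rfl⟩
    simp [Multiset.card_eq_zero.mp hl]
  · rintro rfl
    exact ⟨0, rfl, by simp, rfl⟩

lemma one_mem_zsLengths_iff : 1 ∈ ZSLengths S ↔ IsMinZS S := by
  constructor
  · rintro ⟨l, hl, hmin, rfl⟩
    obtain ⟨T, rfl⟩ := Multiset.card_eq_one.mp hl
    simpa using hmin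
  · intro hS
    exact ⟨{S}, rfl, by simpa using hS, Multiset.sum_singleton S⟩

lemma two_mul_le_card_of_mem_zsLengths (h0 : (0 : G) ∉ S) (hn : n ∈ ZSLengths S) :
    2 * n ≤ Multiset.card S := by
  obtain ⟨l, rfl, hmin, rfl⟩ := hn
  calc 2 * Multiset.card l = (l.map fun _ => 2).sum := by simp [mul_comm]
    _ ≤ (l.map Multiset.card).sum :=
      Multiset.sum_map_le_sum_map _ _ fun T hT =>
        (hmin T hT).two_le_card_of_le (Multiset.le_sum_of_mem hT) h0
    _ = Multiset.card l.sum := (Multiset.card_join l).symm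

lemma even_count_of_two_mul_mem_zsLengths [DecidableEq G] (h0 : (0 : G) ∉ S)
    (hn : n ∈ ZSLengths S) (hcard : Multiset.card S = 2 * n) {g : G} (hg : g + g = 0) :
    Even (S.count g) := by
  obtain ⟨l, rfl, hmin, rfl⟩ := hn
  have htwo (T) (hT : T ∈ l) : 2 ≤ Multiset.card T :=
    (hmin T hT).two_le_card_of_le (Multiset.le_sum_of_mem hT) h0
  have hpair : ∀ T ∈ l, Multiset.card T = 2 := by
    by_contra! ⟨T, hT, hT2⟩
    have hlt : (l.map fun _ => 2).sum < (l.map Multiset.card).sum :=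
      Multiset.sum_lt_sum htwo ⟨T, hT, (htwo T hT).lt_of_ne hT2.symm⟩
    rw [← Multiset.card_join] at hlt
    simp [Multiset.join, hcard, mul_comm] at hlt
  rw [← Multiset.coe_countAddMonoidHom, map_multiset_sum]
  refine Multiset.sum_induction _ _ (fun _ _ => Even.add) Even.zero fun k hk => ?_
  obtain ⟨T, hT, rfl⟩ := Multiset.mem_map.mp hk
  obtain ⟨a, rfl⟩ := (hmin T hT).exists_eq_pair_neg (hpair T hT)
  have hneg : -g = g := neg_eq_of_add_eq_zero_right hg
  by_cases ha : a = g
  · subst ha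
    simp [hneg]
  · have ha' : -a ≠ g := fun h => ha (by rw [← neg_neg a, h, hneg])
    simp [Ne.symm ha, Ne.symm ha']

end ZSLengths

/-- Over `G = C₂⁴`, with `U = e₀e₁e₂e₃e₄` and `U₂ = e₁e₂(e₁+e₃)(e₂+e₄)(e₃+e₄)`, one has
`L(U · U₂) = [2,4] = {2,3,4}`. -/
theorem stmt15 : ZSLengths (UC2 + U2C2) = Set.Icc 2 4 := by
  have h0 : (0 : Fin 4 → ZMod 2) ∉ UC2 + U2C2 := by decide
  ext n
  constructor
  · intro hn
    have hle : 2 * n ≤ 10 := two_mul_le_card_of_mem_zsLengths h0 hn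
    have hn0 : n ≠ 0 := by
      rintro rfl
      exact absurd (zero_mem_zsLengths_iff.mp hn) (by decide)
    have hn1 : n ≠ 1 := by
      rintro rfl
      exact (one_mem_zsLengths_iff.mp hn).2.2 UC2 (Multiset.le_add_right _ _)
        (by decide) (by decide) (by decide)
    have hn5 : n ≠ 5 := by
      rintro rfl
      exact absurd (even_count_of_two_mul_mem_zsLengths h0 hn rfl (g := e0C2) (by decide))
        (by decide)
    simp only [Set.mem_Icc]
    omega
  · rintro ⟨h2, h4⟩
    interval_cases n
    · exact ⟨{UC2, U2C2}, rfl, by decide, rfl⟩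
    · exact ⟨{{eC2 0, eC2 0}, {e0C2, eC2 1, eC2 0 + eC2 2, eC2 3},
        {eC2 1, eC2 2, eC2 1 + eC2 3, eC2 2 + eC2 3}}, rfl, by decide, by decide⟩
    · exact ⟨{{eC2 0, eC2 0}, {eC2 1, eC2 1}, {e0C2, eC2 0 + eC2 2, eC2 1 + eC2 3},
        {eC2 2, eC2 3, eC2 2 + eC2 3}}, rfl, by decide, by decide⟩
end

section
/- Let G = C₂ ⊕ C₄ with basis (e,g), ord(e) = 2, ord(g) = 4, and let U = e·g³·(e+g), a minimal zero-sum sequence of length 5. Then the zero-sum sequence U·(−U) (where −U = e·(−g)³·(e−g)) has set of lengths L(U·(−U)) = {2, 4, 5}. In particular, {2,5} ⊆ L(A) implies L(A) ≠ [2,5] for this A, showing the interval [2,5] arises only with the gap at 3. -/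
/-- The group `G = C₂ ⊕ C₄`. -/
abbrev G24 : Type := ZMod 2 × ZMod 4

/-- The basis element `e` of order 2. -/
def eG : G24 := (1, 0)

/-- The basis element `g` of order 4. -/
def gG : G24 := (0, 1)

/-- The minimal zero-sum sequence `U = e·g³·(e+g)` of length 5 over `C₂ ⊕ C₄`. -/
def U24 : Multiset G24 := ↑[eG, gG, gG, gG, eG + gG]

/-!
Every minimal zero-sum sequence dividing `U·(−U) = e²·g³·(−g)³·(e+g)·(e−g)` is one of the seven
sequences `e²`, `g(−g)`, `(e+g)(e−g)`, `e(−g)(e+g)`, `e g (e−g)`, `U`, `−U`; this is a finite check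
over the `2¹⁰` subsequences. Since `0` does not occur, every atom has length at least `2`, so a
factorization has at most `5` factors. Length `1` fails because `U·(−U)` is not an atom, and
length `3` because no three of the seven atoms multiply to `U·(−U)`. The factorizations
`U·(−U)`, `(g(−g))²·(e g (e−g))·(e(−g)(e+g))` and `(g(−g))³·e²·((e+g)(e−g))` realise `2`, `4`, `5`.
-/

open Multiset

theorem two_mul_card_le_card_sum {α : Type*} {l : Multiset (Multiset α)}
    (hl : ∀ T ∈ l, 2 ≤ card T) : 2 * card l ≤ card l.sum := by
  rw [← join, card_join, mul_comm, ← smul_eq_mul]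
  simpa using card_nsmul_le_sum (s := l.map card) (a := 2) (by simpa using hl)

section ZeroSum

variable {G : Type*} [AddCommGroup G]

theorem isMinZS_iff_forall_mem_powerset (S : Multiset G) :
    IsMinZS S ↔ S ≠ 0 ∧ S.sum = 0 ∧
      ∀ T ∈ S.powerset, T.sum = 0 → T = 0 ∨ card T = card S := by
  simp only [IsMinZS, mem_powerset]
  refine and_congr_right fun _ => and_congr_right fun _ => forall_congr' fun T => ?_
  refine imp_congr_right fun hT => ?_
  have hcard : T = S ↔ card T = card S :=
    ⟨congrArg card, fun h => eq_of_le_of_card_le hT h.ge⟩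
  rw [← hcard]
  tauto

instance [DecidableEq G] : DecidablePred (IsMinZS (G := G)) := fun S =>
  decidable_of_iff _ (isMinZS_iff_forall_mem_powerset S).symm

theorem IsMinZS.two_le_card_s17 {S : Multiset G} (hS : IsMinZS S) (h0 : (0 : G) ∉ S) :
    2 ≤ card S := by
  by_contra! h
  interval_cases hc : card S
  · exact hS.1 (card_eq_zero.mp hc)
  · obtain ⟨a, rfl⟩ := card_eq_one.mp hc
    exact h0 (by simpa using hS.2.1.symm)

theorem length_mem_zsLengths {S : Multiset G} (l : List (Multiset G))
    (hl : ∀ T ∈ l, IsMinZS T) (hS : l.sum = S) : l.length ∈ ZSLengths S :=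
  ⟨l, rfl, hl, by simpa using hS⟩

end ZeroSum

local notation "e" => eG
local notation "g" => gG

abbrev UNegU : Multiset G24 := U24 + U24.map (fun x => -x)

def atomsDvdUNegU : List (Multiset G24) :=
  [{e, e}, {g, -g}, {e + g, e - g}, {e, -g, e + g}, {e, g, e - g}, U24, U24.map (fun x => -x)]

theorem mem_atomsDvdUNegU_of_le {T : Multiset G24} (hT : T ≤ UNegU) (h : IsMinZS T) :
    T ∈ atomsDvdUNegU := by
  suffices ∀ T ∈ UNegU.powerset, IsMinZS T → T ∈ atomsDvdUNegU from
    this T (mem_powerset.mpr hT) h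
  decide +kernel

theorem zero_notMem_UNegU : (0 : G24) ∉ UNegU := by
  decide

theorem not_isMinZS_UNegU : ¬ IsMinZS UNegU := by
  decide

theorem sum_triple_ne_UNegU :
    ∀ x ∈ atomsDvdUNegU, ∀ y ∈ atomsDvdUNegU, ∀ z ∈ atomsDvdUNegU,
      ({x, y, z} : Multiset _).sum ≠ UNegU := by
  decide

theorem zsLengths_UNegU_subset : ZSLengths UNegU ⊆ {2, 4, 5} := by
  rintro _ ⟨l, rfl, hl, hsum⟩
  have hle : ∀ T ∈ l, T ≤ UNegU := fun T hT => hsum ▸ le_sum_of_mem hT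
  have hcard : 2 * card l ≤ card UNegU := hsum ▸ two_mul_card_le_card_sum fun T hT =>
    (hl T hT).two_le_card_s17 fun h0 => zero_notMem_UNegU (mem_of_le (hle T hT) h0)
  replace hcard : card l ≤ 5 := by
    rw [show card UNegU = 10 from rfl] at hcard
    omega
  interval_cases hc : card l
  · rw [card_eq_zero.mp hc, sum_zero] at hsum
    exact absurd hsum (by decide)
  · obtain ⟨T, rfl⟩ := card_eq_one.mp hc
    rw [sum_singleton] at hsum
    exact absurd (hsum ▸ hl T (mem_singleton_self T)) not_isMinZS_UNegU
  · simp
  · obtain ⟨x, y, z, rfl⟩ := card_eq_three.mp hc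
    have hatom : ∀ T ∈ ({x, y, z} : Multiset _), T ∈ atomsDvdUNegU := fun T hT =>
      mem_atomsDvdUNegU_of_le (hle T hT) (hl T hT)
    exact absurd hsum <|
      sum_triple_ne_UNegU x (hatom x (by simp)) y (hatom y (by simp)) z (hatom z (by simp))
  · simp
  · simp

theorem subset_zsLengths_UNegU : {2, 4, 5} ⊆ ZSLengths UNegU := by
  rintro _ (rfl | rfl | rfl)
  · exact length_mem_zsLengths [U24, U24.map (fun x => -x)] (by decide) (by decide)
  · exact length_mem_zsLengths [{g, -g}, {g, -g}, {e, g, e - g}, {e, -g, e + g}]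
      (by decide) (by decide)
  · exact length_mem_zsLengths [{g, -g}, {g, -g}, {g, -g}, {e, e}, {e + g, e - g}]
      (by decide) (by decide)

/-- Over `G = C₂ ⊕ C₄` with `U = e·g³·(e+g)`, the zero-sum sequence `U·(−U)` has set of
lengths `L(U·(−U)) = {2, 4, 5}`. -/
theorem stmt17 : ZSLengths (U24 + U24.map (fun x => -x)) = {2, 4, 5} :=
  zsLengths_UNegU_subset.antisymm subset_zsLengths_UNegU
end

section
/- Let G = C₂ ⊕ C₄ with basis (e,g), ord(e)=2, ord(g)=4, and let A ∈ B(G) be a zero-sum sequence with supp(A) ⊆ {e, g, 2g, e+g, e+2g} and v_e(A) = 1. Then |L(A)| = 1, i.e., A has a unique factorization length; moreover L(A) = {k(A) − 1/2}, where k(A) = Σ_i 1/ord(g_i) is the cross number of A. -/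
/-- The cross number `k(S) = Σ 1/ord(gᵢ)` of a sequence `S` over `C₂ ⊕ C₄`. -/
noncomputable def crossNum (S : Multiset G24) : ℚ :=
  (S.map (fun x => (1 : ℚ) / (addOrderOf x : ℚ))).sum

/- ### Auxiliary machinery -/

def rep (v a b c d : ℕ) : Multiset G24 :=
  Multiset.replicate v eG + Multiset.replicate a gG + Multiset.replicate b (gG+gG) +
  Multiset.replicate c (eG+gG) + Multiset.replicate d (eG+gG+gG)

lemma count_rep_e (v a b c d : ℕ) : (rep v a b c d).count eG = v := by
  simp +decide [rep, Multiset.count_replicate, eG, gG]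

lemma count_rep_g (v a b c d : ℕ) : (rep v a b c d).count gG = a := by
  simp +decide [rep, Multiset.count_replicate, eG, gG]

lemma count_rep_2g (v a b c d : ℕ) : (rep v a b c d).count (gG+gG) = b := by
  simp +decide [rep, Multiset.count_replicate, eG, gG]

lemma count_rep_eg (v a b c d : ℕ) : (rep v a b c d).count (eG+gG) = c := by
  simp +decide [rep, Multiset.count_replicate, eG, gG]

lemma count_rep_e2g (v a b c d : ℕ) : (rep v a b c d).count (eG+gG+gG) = d := by
  simp +decide [rep, Multiset.count_replicate, eG, gG]

lemma card_rep (v a b c d : ℕ) : Multiset.card (rep v a b c d) = v+a+b+c+d := by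
  simp [rep]

lemma mem_rep {x : G24} {v a b c d : ℕ} (h : x ∈ rep v a b c d) :
    x ∈ ({eG, gG, gG + gG, eG + gG, eG + gG + gG} : Set G24) := by
  simp only [rep, Multiset.mem_add, Multiset.mem_replicate] at h
  simp only [Set.mem_insert_iff, Set.mem_singleton_iff]
  tauto

lemma rep_inj {v a b c d v' a' b' c' d' : ℕ}
    (h : rep v a b c d = rep v' a' b' c' d') :
    v = v' ∧ a = a' ∧ b = b' ∧ c = c' ∧ d = d' := by
  refine ⟨?_, ?_, ?_, ?_, ?_⟩
  · rw [← count_rep_e v a b c d, ← count_rep_e v' a' b' c' d', h]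
  · rw [← count_rep_g v a b c d, ← count_rep_g v' a' b' c' d', h]
  · rw [← count_rep_2g v a b c d, ← count_rep_2g v' a' b' c' d', h]
  · rw [← count_rep_eg v a b c d, ← count_rep_eg v' a' b' c' d', h]
  · rw [← count_rep_e2g v a b c d, ← count_rep_e2g v' a' b' c' d', h]

lemma eq_rep {S : Multiset G24}
    (h : ∀ x ∈ S, x ∈ ({eG, gG, gG + gG, eG + gG, eG + gG + gG} : Set G24)) :
    S = rep (S.count eG) (S.count gG) (S.count (gG+gG)) (S.count (eG+gG)) (S.count (eG+gG+gG)) := by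
  ext y
  by_cases hy : y ∈ ({eG, gG, gG + gG, eG + gG, eG + gG + gG} : Set G24)
  · simp only [Set.mem_insert_iff, Set.mem_singleton_iff] at hy
    rcases hy with rfl | rfl | rfl | rfl | rfl
    · rw [count_rep_e]
    · rw [count_rep_g]
    · rw [count_rep_2g]
    · rw [count_rep_eg]
    · rw [count_rep_e2g]
  · rw [Multiset.count_eq_zero.2 (fun hmem => hy (h y hmem)),
      Multiset.count_eq_zero.2 (fun hmem => hy (mem_rep hmem))]

lemma rep_mono {v a b c d v' a' b' c' d' : ℕ} (hv : v' ≤ v) (ha : a' ≤ a) (hb : b' ≤ b)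
    (hc : c' ≤ c) (hd : d' ≤ d) : rep v' a' b' c' d' ≤ rep v a b c d := by
  unfold rep
  exact add_le_add (add_le_add (add_le_add (add_le_add
    ((Multiset.replicate_le_replicate _).2 hv) ((Multiset.replicate_le_replicate _).2 ha))
    ((Multiset.replicate_le_replicate _).2 hb)) ((Multiset.replicate_le_replicate _).2 hc))
    ((Multiset.replicate_le_replicate _).2 hd)

lemma sum_rep (v a b c d : ℕ) : (rep v a b c d).sum =
    (((v+c+d : ℕ) : ZMod 2), ((a+2*b+c+2*d : ℕ) : ZMod 4)) := by
  simp [rep, Multiset.sum_replicate, eG, gG, nsmul_eq_mul, Prod.ext_iff]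
  push_cast
  ring

lemma sum_rep_zero {v a b c d : ℕ} :
    (rep v a b c d).sum = 0 ↔ (v+c+d) % 2 = 0 ∧ (a+2*b+c+2*d) % 4 = 0 := by
  rw [sum_rep, Prod.ext_iff]
  simp only [Prod.fst_zero, Prod.snd_zero]
  rw [ZMod.natCast_eq_zero_iff, ZMod.natCast_eq_zero_iff,
    Nat.dvd_iff_mod_eq_zero, Nat.dvd_iff_mod_eq_zero]

/-- The inner minimality predicate on count tuples. -/
def innerP (v a b c d : ℕ) : Prop :=
  ∀ v' ≤ v, ∀ a' ≤ a, ∀ b' ≤ b, ∀ c' ≤ c, ∀ d' ≤ d,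
      (v'+c'+d') % 2 = 0 → (a'+2*b'+c'+2*d') % 4 = 0 →
      v'+a'+b'+c'+d' = 0 ∨ (v'=v ∧ a'=a ∧ b'=b ∧ c'=c ∧ d'=d)

set_option synthInstance.maxSize 50000 in
set_option synthInstance.maxHeartbeats 2000000 in
instance innerP.dec (v a b c d : ℕ) : Decidable (innerP v a b c d) := by
  unfold innerP; infer_instance

set_option synthInstance.maxSize 50000 in
set_option synthInstance.maxHeartbeats 2000000 in
set_option maxRecDepth 100000 in
/-- The finite core computation. -/
lemma core : ∀ v < 2, ∀ a < 4, ∀ b < 2, ∀ c < 4, ∀ d < 2,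
    (v+c+d) % 2 = 0 → (a+2*b+c+2*d) % 4 = 0 → v+a+b+c+d ≠ 0 →
    innerP v a b c d → a+2*b+c+2*d = 4 := by decide

/-- From minimality of `rep v a b c d`, the count-tuple minimality predicate holds. -/
lemma min_tuple {v a b c d : ℕ} (hmin : IsMinZS (rep v a b c d)) : innerP v a b c d := by
  intro v' hv a' ha b' hb c' hc d' hd h2 h4
  by_contra hcon
  push_neg at hcon
  obtain ⟨hne0, hnee⟩ := hcon
  have hle := rep_mono hv ha hb hc hd
  have hT0 : rep v' a' b' c' d' ≠ 0 := by
    intro h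
    have hc2 := card_rep v' a' b' c' d'
    rw [h] at hc2
    simp at hc2
    omega
  have hTS : rep v' a' b' c' d' ≠ rep v a b c d := by
    intro h
    exact hnee (rep_inj h).1 (rep_inj h).2.1 (rep_inj h).2.2.1 (rep_inj h).2.2.2.1
      (rep_inj h).2.2.2.2
  exact hmin.2.2 _ hle hT0 hTS (sum_rep_zero.2 ⟨h2, h4⟩)

/-- Main structural lemma. -/
lemma main_aux {v a b c d : ℕ} (hv : v ≤ 1) (hmin : IsMinZS (rep v a b c d)) :
    a + 2*b + c + 2*d = 4 := by
  have hmt := min_tuple hmin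
  have hzs := sum_rep_zero.1 hmin.2.1
  have hcard : v+a+b+c+d ≠ 0 := by
    intro h
    apply hmin.1
    have h0 : rep v a b c d = rep 0 0 0 0 0 := by
      have hall : v = 0 ∧ a = 0 ∧ b = 0 ∧ c = 0 ∧ d = 0 := by omega
      obtain ⟨rfl, rfl, rfl, rfl, rfl⟩ := hall
      rfl
    rw [h0]; rfl
  by_cases ha4 : 4 ≤ a
  · rcases hmt 0 (by omega) 4 ha4 0 (by omega) 0 (by omega) 0 (by omega) (by norm_num)
      (by norm_num) with h | h <;> omega
  by_cases hb2 : 2 ≤ b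
  · rcases hmt 0 (by omega) 0 (by omega) 2 hb2 0 (by omega) 0 (by omega) (by norm_num)
      (by norm_num) with h | h <;> omega
  by_cases hc4 : 4 ≤ c
  · rcases hmt 0 (by omega) 0 (by omega) 0 (by omega) 4 hc4 0 (by omega) (by norm_num)
      (by norm_num) with h | h <;> omega
  by_cases hd2 : 2 ≤ d
  · rcases hmt 0 (by omega) 0 (by omega) 0 (by omega) 0 (by omega) 2 hd2 (by norm_num)
      (by norm_num) with h | h <;> omega
  exact core v (by omega) a (by omega) b (by omega) c (by omega) d (by omega)
    hzs.1 hzs.2 hcard hmt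

/- ### cross number computations -/

lemma ord_e : addOrderOf eG = 2 := by
  rw [addOrderOf_eq_iff (by norm_num)]; exact ⟨by decide, by decide⟩

lemma ord_g : addOrderOf gG = 4 := by
  rw [addOrderOf_eq_iff (by norm_num)]; exact ⟨by decide, by decide⟩

lemma ord_2g : addOrderOf (gG+gG) = 2 := by
  rw [addOrderOf_eq_iff (by norm_num)]; exact ⟨by decide, by decide⟩

lemma ord_eg : addOrderOf (eG+gG) = 4 := by
  rw [addOrderOf_eq_iff (by norm_num)]; exact ⟨by decide, by decide⟩

lemma ord_e2g : addOrderOf (eG+gG+gG) = 2 := by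
  rw [addOrderOf_eq_iff (by norm_num)]; exact ⟨by decide, by decide⟩

lemma crossNum_add (S T : Multiset G24) : crossNum (S + T) = crossNum S + crossNum T := by
  simp [crossNum]

lemma crossNum_replicate (n : ℕ) (x : G24) :
    crossNum (Multiset.replicate n x) = n * (1 / (addOrderOf x : ℚ)) := by
  simp [crossNum, Multiset.map_replicate, Multiset.sum_replicate, nsmul_eq_mul]

lemma crossNum_rep (v a b c d : ℕ) :
    crossNum (rep v a b c d) = (2*v + a + 2*b + c + 2*d) / 4 := by
  simp only [rep, crossNum_add, crossNum_replicate, ord_e, ord_g, ord_2g, ord_eg, ord_e2g]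
  push_cast
  ring

lemma crossNum_atom {v a b c d : ℕ} (hv : v ≤ 1) (hmin : IsMinZS (rep v a b c d)) :
    crossNum (rep v a b c d) = 1 + (v : ℚ) / 2 := by
  have h4 := main_aux hv hmin
  rw [crossNum_rep]
  have h4' : (a : ℚ) + 2*b + c + 2*d = 4 := by exact_mod_cast h4
  field_simp
  linarith

lemma crossNum_sum (l : Multiset (Multiset G24)) :
    crossNum l.sum = (l.map crossNum).sum := by
  induction l using Multiset.induction with
  | empty => simp [crossNum]
  | cons T l ih => simp [crossNum_add, ih]

lemma count_msum (x : G24) (l : Multiset (Multiset G24)) :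
    l.sum.count x = (l.map (fun T => T.count x)).sum := by
  induction l using Multiset.induction with
  | empty => simp
  | cons T l ih => simp [ih]

/- ### Every factorization of `A` has length `n` -/

lemma length_eq {a b c d n : ℕ} (h4 : a + 2*b + c + 2*d = 4*n)
    (l : Multiset (Multiset G24)) (hl : ∀ T ∈ l, IsMinZS T)
    (hs : l.sum = rep 1 a b c d) : Multiset.card l = n := by
  have key : ∀ T ∈ l, crossNum T = 1 + (T.count eG : ℚ) / 2 := by
    intro T hT
    have hTle : T ≤ rep 1 a b c d := by
      rw [← hs]
      exact Multiset.le_sum_of_mem hT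
    have hsupp : ∀ x ∈ T, x ∈ ({eG, gG, gG + gG, eG + gG, eG + gG + gG} : Set G24) :=
      fun x hx => mem_rep (Multiset.mem_of_le hTle hx)
    have hvT : T.count eG ≤ 1 := by
      have hcc := Multiset.count_le_of_le eG hTle
      rwa [count_rep_e] at hcc
    have hrepT := eq_rep hsupp
    have hm : IsMinZS (rep (T.count eG) (T.count gG) (T.count (gG+gG)) (T.count (eG+gG))
        (T.count (eG+gG+gG))) := hrepT ▸ hl T hT
    calc crossNum T = crossNum (rep (T.count eG) (T.count gG) (T.count (gG+gG))
        (T.count (eG+gG)) (T.count (eG+gG+gG))) := by rw [← hrepT]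
      _ = 1 + (T.count eG : ℚ) / 2 := crossNum_atom hvT hm
  have hcount : (l.map (fun T => T.count eG)).sum = 1 := by
    rw [← count_msum, hs, count_rep_e]
  have hcn : crossNum (rep 1 a b c d) = (Multiset.card l : ℚ) + 1 / 2 := by
    rw [← hs, crossNum_sum, Multiset.map_congr rfl key]
    have h1 : l.map (fun T => 1 + (T.count eG : ℚ) / 2)
        = l.map (fun T => (fun _ : Multiset G24 => (1:ℚ)) T
            + (fun T : Multiset G24 => ((T.count eG : ℚ) * (2:ℚ)⁻¹)) T) :=
      Multiset.map_congr rfl (fun T _ => by ring)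
    rw [h1, Multiset.sum_map_add]
    have h2 : (l.map (fun T : Multiset G24 => (T.count eG : ℚ) * (2:ℚ)⁻¹)).sum
        = (l.map (fun T : Multiset G24 => ((T.count eG : ℚ)))).sum * (2:ℚ)⁻¹ :=
      Multiset.sum_map_mul_right ..
    rw [h2]
    have h3 : (l.map (fun T : Multiset G24 => ((T.count eG : ℚ)))).sum
        = (((l.map (fun T => T.count eG)).sum : ℕ) : ℚ) := by
      rw [Nat.cast_multiset_sum, Multiset.map_map]
      rfl
    rw [h3, hcount, Multiset.map_const', Multiset.sum_replicate]
    push_cast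
    ring
  have hq : ((Multiset.card l : ℚ)) = n := by
    rw [crossNum_rep] at hcn
    have h4' : ((a : ℚ) + 2*b + c + 2*d) = 4*n := by exact_mod_cast h4
    push_cast at hcn
    linarith
  exact_mod_cast hq

/- ### Existence of a factorization -/

lemma exists_fact : ∀ S : Multiset G24, S.sum = 0 →
    ∃ l : Multiset (Multiset G24), (∀ T ∈ l, IsMinZS T) ∧ l.sum = S := by
  intro S
  induction S using Multiset.strongInductionOn with
  | ih S ih =>
    intro hsum
    by_cases h0 : S = 0
    · exact ⟨0, by simp, by simp [h0]⟩
    by_cases hm : IsMinZS S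
    · exact ⟨{S}, by simpa using hm, by simp⟩
    · have hex : ∃ T : Multiset G24, T ≤ S ∧ T ≠ 0 ∧ T ≠ S ∧ T.sum = 0 := by
        by_contra hcon
        push_neg at hcon
        exact hm ⟨h0, hsum, fun T hle hne0 hneS => hcon T hle hne0 hneS⟩
      obtain ⟨T, hle, hne0, hneS, hTsum⟩ := hex
      have hTlt : T < S := lt_of_le_of_ne hle hneS
      have hST : T + (S - T) = S := add_tsub_cancel_of_le hle
      have hSTlt : S - T < S := by
        have hcardT : 0 < Multiset.card T := Multiset.card_pos.2 hne0
        have hcs : Multiset.card (S - T) < Multiset.card S := by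
          rw [Multiset.card_sub hle]
          have hlec := Multiset.card_le_card hle
          omega
        exact lt_of_le_of_ne tsub_le_self (fun h => by rw [h] at hcs; omega)
      have hSTsum : (S - T).sum = 0 := by
        have hcg := congrArg Multiset.sum hST
        rw [Multiset.sum_add, hTsum, hsum] at hcg
        simpa using hcg
      obtain ⟨l1, hl1, hl1s⟩ := ih T hTlt hTsum
      obtain ⟨l2, hl2, hl2s⟩ := ih (S - T) hSTlt hSTsum
      refine ⟨l1 + l2, ?_, ?_⟩
      · intro U hU
        rcases Multiset.mem_add.1 hU with h | h
        · exact hl1 U h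
        · exact hl2 U h
      · rw [Multiset.sum_add, hl1s, hl2s, hST]

/- ### Main theorem -/

/-- Let `G = C₂ ⊕ C₄` with basis `(e, g)`, and let `A` be a zero-sum sequence with
`supp(A) ⊆ {e, g, 2g, e+g, e+2g}` and `v_e(A) = 1`. Then `A` has a unique factorization
length, namely `L(A) = {k(A) − 1/2}` where `k(A)` is the cross number of `A`. -/
theorem stmt19 (A : Multiset G24) (hsum : A.sum = 0)
    (hsupp : ∀ x ∈ A, x ∈ ({eG, gG, gG + gG, eG + gG, eG + gG + gG} : Set G24))
    (hve : A.count eG = 1) :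
    ∃ n : ℕ, ZSLengths A = {n} ∧ (n : ℚ) = crossNum A - 1 / 2 := by
  have hrep := eq_rep hsupp
  rw [hve] at hrep
  set a := A.count gG
  set b := A.count (gG+gG)
  set c := A.count (eG+gG)
  set d := A.count (eG+gG+gG)
  have hzs : (1+c+d) % 2 = 0 ∧ (a+2*b+c+2*d) % 4 = 0 := by
    rw [← sum_rep_zero, ← hrep]
    exact hsum
  obtain ⟨h2, h4m⟩ := hzs
  refine ⟨(a+2*b+c+2*d)/4, ?_, ?_⟩
  · have h4 : a + 2*b + c + 2*d = 4 * ((a+2*b+c+2*d)/4) := by omega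
    ext m
    simp only [ZSLengths, Set.mem_setOf_eq, Set.mem_singleton_iff]
    constructor
    · rintro ⟨l, hcard, hl, hs⟩
      rw [← hcard]
      exact length_eq h4 l hl (by rw [hs, hrep])
    · rintro rfl
      obtain ⟨l, hl, hs⟩ := exists_fact A hsum
      exact ⟨l, length_eq h4 l hl (by rw [hs, hrep]), hl, hs⟩
  · have hcn : crossNum A = (2*1 + a + 2*b + c + 2*d) / 4 := by
      rw [hrep, crossNum_rep]
      push_cast
      ring
    rw [hcn]
    have hn : ((a+2*b+c+2*d)/4 : ℕ) * 4 = a+2*b+c+2*d := by omega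
    have hn' : (((a+2*b+c+2*d)/4 : ℕ) : ℚ) * 4 = (a:ℚ)+2*b+c+2*d := by exact_mod_cast hn
    push_cast
    linarith
end
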